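/- Let Δ ∈ M_m(ℂ) be a traceless Hermitian matrix with Jordan decomposition Δ = Δ₊ − Δ₋, let P₊ be the projector onto the strictly positive eigenspace of Δ, let P₀ be the projector onto its kernel, and let E₀ be Hermitian with 0 ≤ E₀ ≤ P₀. Define λ_cg : M_m(ℂ) → M_d(ℂ) (d ≥ 2) by λ_cg(X) = Tr((P₊ + E₀) X) |0⟩⟨0| + Tr((I − P₊ − E₀) X) |1⟩⟨1|, where |0⟩, |1⟩ are two fixed orthonormal vectors of ℂ^d. Then λ_cg is completely positive and trace-preserving, λ_cg(Δ) = ‖Δ₊‖₁ |0⟩⟨0| − ‖Δ₋‖₁ |1⟩⟨1|, and consequently ‖λ_cg(Δ)‖₁ = ‖Δ‖₁. -/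

import Mathlib

open scoped ComplexOrder

/-- The trace norm (Schatten 1-norm) of a complex matrix: `‖A‖₁ = Tr √(Aᴴ A)`. -/
noncomputable def traceNorm {m : Type*} [Fintype m] [DecidableEq m]
    (A : Matrix m m ℂ) : ℝ :=
  (((Matrix.posSemidef_conjTranspose_mul_self A).1.eigenvectorUnitary.1 *
      Matrix.diagonal (((↑) : ℝ → ℂ) ∘ (Real.sqrt ·) ∘ (Matrix.posSemidef_conjTranspose_mul_self A).1.eigenvalues) *
      (star (Matrix.posSemidef_conjTranspose_mul_self A).1.eigenvectorUnitary : Matrix m m ℂ)).trace).re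

/-- The tensor product `Φ ⊗ id_{M_k(ℂ)}` of a map between matrix algebras with the
identity on `M_k(ℂ)`, acting blockwise. -/
def mapTensorId {m d : Type*} [Fintype m] [Fintype d] (k : ℕ)
    (Φ : Matrix m m ℂ → Matrix d d ℂ)
    (M : Matrix (m × Fin k) (m × Fin k) ℂ) : Matrix (d × Fin k) (d × Fin k) ℂ :=
  Matrix.of fun p q => Φ (Matrix.of fun i j => M (i, p.2) (j, q.2)) p.1 q.1

/-- A map between matrix algebras is completely positive if `Φ ⊗ id_{M_k(ℂ)}` is
positive for every `k`. -/
def IsCompletelyPositive {m d : Type*} [Fintype m] [Fintype d]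
    (Φ : Matrix m m ℂ → Matrix d d ℂ) : Prop :=
  ∀ (k : ℕ) (M : Matrix (m × Fin k) (m × Fin k) ℂ),
    M.PosSemidef → (mapTensorId k Φ M).PosSemidef

/-- A map between matrix algebras is trace-preserving if `Tr (Φ X) = Tr X` for all `X`. -/
def IsTracePreservingMap {m d : Type*} [Fintype m] [Fintype d]
    (Φ : Matrix m m ℂ → Matrix d d ℂ) : Prop :=
  ∀ X : Matrix m m ℂ, (Φ X).trace = X.trace

/-- `P` is the orthogonal projector onto the support (range) of the Hermitian matrix `Q`. -/
def IsSupportProjection {d : Type*} [Fintype d]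
    (P Q : Matrix d d ℂ) : Prop :=
  P.IsHermitian ∧ P * P = P ∧ P * Q = Q ∧
    ∀ v : d → ℂ, Q.mulVec v = 0 → P.mulVec v = 0

/-- The coarse-graining (measurement) map
`λ_cg(X) = Tr(F X) |0⟩⟨0| + Tr((I − F) X) |1⟩⟨1|`, where `F = P₊ + E₀` and
`|0⟩, |1⟩` are two fixed orthonormal vectors of `ℂ^d`. -/
noncomputable def lamCG {m d : ℕ} (F : Matrix (Fin m) (Fin m) ℂ) (e0 e1 : Fin d → ℂ)
    (X : Matrix (Fin m) (Fin m) ℂ) : Matrix (Fin d) (Fin d) ℂ :=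
  ((F * X).trace) • Matrix.vecMulVec e0 (star e0) +
    (((1 - F) * X).trace) • Matrix.vecMulVec e1 (star e1)

/-! With `F = P₊ + E₀`, both `F` and `1 - F = (P₀ - E₀) + P₋` are positive, so `λ_cg` is a sum of
two maps `X ↦ Tr(F X) • Q` with `F, Q ≥ 0`. Each is completely positive: its ampliation sends `M`
to the Kronecker product of `Q` with the matrix `(Tr(F M_{jj'}))_{jj'}`, which is a sum of
compressions `Wᴴ M W` once `F` is split into rank-one pieces.

Since `0 ≤ P₊ E₀ P₊ ≤ P₊ P₀ P₊ = 0` (and likewise for `P₋`), `E₀` is invisible to `Δ₊` and `Δ₋`,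
so `Tr(F Δ) = Tr Δ₊` and `Tr((1 - F) Δ) = -Tr Δ₋`. Finally, for positive `P, N` with `P N = 0`,
`(P + N)² = (P - N)ᴴ (P - N)`, so `‖P - N‖₁ = Tr P + Tr N`; this applies both to `Δ` and to
`λ_cg(Δ)`, whose two terms are supported on the orthogonal vectors `|0⟩`, `|1⟩`. -/

open Matrix

open scoped Kronecker MatrixOrder

section TraceNorm

variable {n : Type*} [Fintype n] [DecidableEq n]

lemma traceNorm_eq_re_trace_of_mul_self {A B : Matrix n n ℂ} (hB : B.PosSemidef)
    (h : B * B = Aᴴ * A) : traceNorm A = B.trace.re := by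
  have hAA := posSemidef_conjTranspose_mul_self A
  -- `traceNorm A` is the trace of `√(Aᴴ A)` computed by the Hermitian functional calculus.
  change ((hAA.1.cfc Real.sqrt).trace).re = _
  rw [← hAA.1.cfc_eq, ← cfcₙ_eq_cfc, ← CFC.sqrt_eq_real_sqrt _ hAA.nonneg,
    CFC.sqrt_unique h hB.nonneg]

lemma Matrix.PosSemidef.traceNorm_eq {A : Matrix n n ℂ} (hA : A.PosSemidef) :
    traceNorm A = A.trace.re :=
  traceNorm_eq_re_trace_of_mul_self hA (by rw [hA.1.eq])

lemma Matrix.PosSemidef.ofReal_traceNorm {A : Matrix n n ℂ} (hA : A.PosSemidef) :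
    (traceNorm A : ℂ) = A.trace := by
  rw [hA.traceNorm_eq]
  exact (Complex.eq_re_of_ofReal_le (r := 0) (by simpa using hA.trace_nonneg)).symm

lemma traceNorm_sub_of_mul_eq_zero {P N : Matrix n n ℂ} (hP : P.PosSemidef) (hN : N.PosSemidef)
    (hPN : P * N = 0) : traceNorm (P - N) = traceNorm P + traceNorm N := by
  have hNP : N * P = 0 := by
    simpa [hP.1.eq, hN.1.eq] using congrArg conjTranspose hPN
  rw [traceNorm_eq_re_trace_of_mul_self (hP.add hN), trace_add, Complex.add_re,
    hP.traceNorm_eq, hN.traceNorm_eq]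
  rw [conjTranspose_sub, hP.1.eq, hN.1.eq]
  simp only [add_mul, mul_add, sub_mul, mul_sub, hPN, hNP]
  abel

lemma traceNorm_smul_vecMulVec_sub_smul_vecMulVec {e0 e1 : n → ℂ} (he0 : star e0 ⬝ᵥ e0 = 1)
    (he1 : star e1 ⬝ᵥ e1 = 1) (he01 : star e0 ⬝ᵥ e1 = 0) {a b : ℂ} (ha : 0 ≤ a) (hb : 0 ≤ b) :
    traceNorm (a • vecMulVec e0 (star e0) - b • vecMulVec e1 (star e1)) = a.re + b.re := by
  have h0 := (posSemidef_vecMulVec_self_star e0).smul ha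
  have h1 := (posSemidef_vecMulVec_self_star e1).smul hb
  rw [traceNorm_sub_of_mul_eq_zero h0 h1, h0.traceNorm_eq, h1.traceNorm_eq]
  · simp [dotProduct_comm e0, he0, dotProduct_comm e1, he1]
  · rw [smul_mul_smul_comm, vecMulVec_mul_vecMulVec, he01, zero_smul, vecMulVec_zero, smul_zero]

end TraceNorm

namespace IsSupportProjection

variable {n : Type*} [Fintype n] {P Q : Matrix n n ℂ}

lemma posSemidef (hP : IsSupportProjection P Q) : P.PosSemidef := by
  simpa [hP.1.eq, hP.2.1] using posSemidef_conjTranspose_mul_self P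

lemma mul_eq_self (hP : IsSupportProjection P Q) (hQ : Q.IsHermitian) : Q * P = Q := by
  simpa [hP.1.eq, hQ.eq] using congrArg conjTranspose hP.2.2.1

variable [DecidableEq n]

lemma mul_eq_zero_of_mul_eq_zero (hP : IsSupportProjection P Q) {B : Matrix n n ℂ}
    (hQB : Q * B = 0) : P * B = 0 := by
  refine Matrix.ext_of_mulVec_single fun j => ?_
  rw [← mulVec_mulVec, hP.2.2.2 _ (by rw [mulVec_mulVec, hQB, zero_mulVec]), zero_mulVec]

lemma mul_eq_zero {P' Q' : Matrix n n ℂ} (hP : IsSupportProjection P Q)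
    (hP' : IsSupportProjection P' Q') (hQ' : Q'.IsHermitian) (hQQ' : Q * Q' = 0) :
    P * P' = 0 := by
  have hQ'P : Q' * P = 0 := by
    simpa [hP.1.eq, hQ'.eq] using congrArg conjTranspose (hP.mul_eq_zero_of_mul_eq_zero hQQ')
  simpa [hP.1.eq, hP'.1.eq] using congrArg conjTranspose (hP'.mul_eq_zero_of_mul_eq_zero hQ'P)

end IsSupportProjection

lemma trace_mul_eq_zero_of_le_of_mul_eq_zero {n : Type*} [Fintype n] {E P₀ P D : Matrix n n ℂ}
    (hE : 0 ≤ E) (hEP₀ : E ≤ P₀) (hP : P.IsHermitian) (hPP₀ : P * P₀ = 0)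
    (hD : P * D * P = D) : (E * D).trace = 0 := by
  have hPEP : P * E * P = 0 := by
    refine le_antisymm ?_ (by simpa [hP.star_eq] using star_left_conjugate_nonneg hE P)
    simpa [hP.star_eq, hPP₀] using star_left_conjugate_le_conjugate hEP₀ P
  rw [← hD, ← mul_assoc, ← mul_assoc, trace_mul_cycle, ← mul_assoc, hPEP, zero_mul, trace_zero]

lemma trace_mul_sub_eq_trace_of_isSupportProjection {n : Type*} [Fintype n] [DecidableEq n]
    {Δp Δm Pp Pm E₀ : Matrix n n ℂ} (hΔp : Δp.PosSemidef) (hΔm : Δm.PosSemidef)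
    (horth : Δp * Δm = 0) (hPp : IsSupportProjection Pp Δp) (hPm : IsSupportProjection Pm Δm)
    (hE₀ : 0 ≤ E₀) (hE₀le : E₀ ≤ 1 - Pp - Pm) :
    ((Pp + E₀) * (Δp - Δm)).trace = Δp.trace := by
  have hPpPm : Pp * Pm = 0 := hPp.mul_eq_zero hPm hΔm.1 horth
  have hPmPp : Pm * Pp = 0 :=
    hPm.mul_eq_zero hPp hΔp.1 (by simpa [hΔp.1.eq, hΔm.1.eq] using congrArg conjTranspose horth)
  have hE₀Δp : (E₀ * Δp).trace = 0 :=
    trace_mul_eq_zero_of_le_of_mul_eq_zero hE₀ hE₀le hPp.1 (by simp [mul_sub, hPp.2.1, hPpPm])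
      (by rw [hPp.2.2.1, hPp.mul_eq_self hΔp.1])
  have hE₀Δm : (E₀ * Δm).trace = 0 :=
    trace_mul_eq_zero_of_le_of_mul_eq_zero hE₀ hE₀le hPm.1 (by simp [mul_sub, hPm.2.1, hPmPp])
      (by rw [hPm.2.2.1, hPm.mul_eq_self hΔm.1])
  rw [add_mul, mul_sub, mul_sub, trace_add, trace_sub, trace_sub, hPp.2.2.1,
    hPp.mul_eq_zero_of_mul_eq_zero horth, hE₀Δp, hE₀Δm]
  simp

lemma posSemidef_trace_mul_blocks {m k : Type*} [Fintype m] [Fintype k] [DecidableEq k]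
    {F : Matrix m m ℂ} {M : Matrix (m × k) (m × k) ℂ} (hF : F.PosSemidef) (hM : M.PosSemidef) :
    (of fun j j' => (F * of fun i i' => M (i, j) (i', j')).trace).PosSemidef := by
  obtain ⟨r, v, rfl⟩ := posSemidef_iff_eq_sum_vecMulVec.mp hF
  let W : Fin r → Matrix (m × k) k ℂ := fun l => of fun p j => if p.2 = j then v l p.1 else 0
  suffices h : (of fun j j' => ((∑ l, vecMulVec (v l) (star (v l))) *
      of fun i i' => M (i, j) (i', j')).trace) = ∑ l, (W l)ᴴ * M * W l by
    rw [h]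
    exact posSemidef_sum _ fun l _ => hM.conjTranspose_mul_mul_same _
  ext j j'
  simp only [W, of_apply, trace, diag, Matrix.sum_apply, Matrix.mul_apply, conjTranspose_apply,
    Fintype.sum_prod_type, Finset.sum_mul, vecMulVec_apply, apply_ite star, ite_mul, mul_ite,
    star_zero, zero_mul, mul_zero, Finset.sum_ite_eq', Finset.mem_univ, if_true]
  conv_rhs => rw [Finset.sum_comm]
  refine Finset.sum_congr rfl fun i _ => ?_
  rw [Finset.sum_comm]
  exact Finset.sum_congr rfl fun l _ => Finset.sum_congr rfl fun i' _ => by simp; ring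

section CompletelyPositive

variable {m d : Type*} [Fintype m] [Fintype d]

lemma IsCompletelyPositive.add {Φ Ψ : Matrix m m ℂ → Matrix d d ℂ} (hΦ : IsCompletelyPositive Φ)
    (hΨ : IsCompletelyPositive Ψ) : IsCompletelyPositive (Φ + Ψ) :=
  fun k M hM => (hΦ k M hM).add (hΨ k M hM)

lemma mapTensorId_trace_mul_smul (k : ℕ) (F : Matrix m m ℂ) (Q : Matrix d d ℂ)
    (M : Matrix (m × Fin k) (m × Fin k) ℂ) :
    mapTensorId k (fun X => (F * X).trace • Q) M
      = Q ⊗ₖ of fun j j' => (F * of fun i i' => M (i, j) (i', j')).trace := by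
  ext p q
  simp [mapTensorId, mul_comm]

lemma isCompletelyPositive_trace_mul_smul {F : Matrix m m ℂ} {Q : Matrix d d ℂ}
    (hF : F.PosSemidef) (hQ : Q.PosSemidef) :
    IsCompletelyPositive fun X : Matrix m m ℂ => (F * X).trace • Q := fun k M hM => by
  rw [mapTensorId_trace_mul_smul]
  exact hQ.kronecker (posSemidef_trace_mul_blocks hF hM)

end CompletelyPositive

section LamCG

variable {m d : ℕ} (F : Matrix (Fin m) (Fin m) ℂ) (e0 e1 : Fin d → ℂ)

lemma isLinearMap_lamCG : IsLinearMap ℂ (lamCG F e0 e1) where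
  map_add X Y := by
    simp only [lamCG, mul_add, trace_add, add_smul]
    abel
  map_smul c X := by simp [lamCG, smul_add, smul_smul]

variable {F e0 e1}

lemma isCompletelyPositive_lamCG (hF : F.PosSemidef) (h1F : (1 - F).PosSemidef) :
    IsCompletelyPositive (lamCG F e0 e1) :=
  (isCompletelyPositive_trace_mul_smul hF (posSemidef_vecMulVec_self_star e0)).add
    (isCompletelyPositive_trace_mul_smul h1F (posSemidef_vecMulVec_self_star e1))

lemma isTracePreservingMap_lamCG (he0 : star e0 ⬝ᵥ e0 = 1) (he1 : star e1 ⬝ᵥ e1 = 1) :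
    IsTracePreservingMap (lamCG F e0 e1) := fun X => by
  simp [lamCG, dotProduct_comm e0, he0, dotProduct_comm e1, he1, sub_mul]

end LamCG

theorem lamCG_is_CPTP_and_preserves_traceNorm_general
    {m d : ℕ}
    (Δ Δp Δm : Matrix (Fin m) (Fin m) ℂ)
    (hΔp : Δp.PosSemidef) (hΔm : Δm.PosSemidef)
    (hJordan : Δ = Δp - Δm) (horth : Δp * Δm = 0)
    (Pp Pm : Matrix (Fin m) (Fin m) ℂ)
    (hPp : IsSupportProjection Pp Δp) (hPm : IsSupportProjection Pm Δm)
    (P0 : Matrix (Fin m) (Fin m) ℂ) (hP0 : P0 = 1 - Pp - Pm)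
    (E₀ : Matrix (Fin m) (Fin m) ℂ)
    (hE₀pos : E₀.PosSemidef) (hE₀le : (P0 - E₀).PosSemidef)
    (e0 e1 : Fin d → ℂ)
    (he0 : ∑ x : Fin d, (starRingEnd ℂ) (e0 x) * e0 x = 1)
    (he1 : ∑ x : Fin d, (starRingEnd ℂ) (e1 x) * e1 x = 1)
    (he01 : ∑ x : Fin d, (starRingEnd ℂ) (e0 x) * e1 x = 0) :
    IsLinearMap ℂ (lamCG (Pp + E₀) e0 e1) ∧
    IsCompletelyPositive (lamCG (Pp + E₀) e0 e1) ∧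
    IsTracePreservingMap (lamCG (Pp + E₀) e0 e1) ∧
    lamCG (Pp + E₀) e0 e1 Δ
      = (traceNorm Δp : ℂ) • Matrix.vecMulVec e0 (star e0)
        - (traceNorm Δm : ℂ) • Matrix.vecMulVec e1 (star e1) ∧
    traceNorm (lamCG (Pp + E₀) e0 e1 Δ) = traceNorm Δ := by
  subst hJordan hP0
  have hF : (Pp + E₀).PosSemidef := hPp.posSemidef.add hE₀pos
  have h1F : (1 - (Pp + E₀)).PosSemidef := by
    rw [show 1 - (Pp + E₀) = (1 - Pp - Pm - E₀) + Pm by abel]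
    exact hE₀le.add hPm.posSemidef
  have hTrF := trace_mul_sub_eq_trace_of_isSupportProjection hΔp hΔm horth hPp hPm hE₀pos.nonneg hE₀le
  have himage : lamCG (Pp + E₀) e0 e1 (Δp - Δm)
      = Δp.trace • vecMulVec e0 (star e0) - Δm.trace • vecMulVec e1 (star e1) := by
    rw [lamCG, hTrF, sub_mul, one_mul, trace_sub, hTrF, trace_sub, sub_sub_cancel_left, neg_smul,
      ← sub_eq_add_neg]
  rw [hΔp.ofReal_traceNorm, hΔm.ofReal_traceNorm]
  refine ⟨isLinearMap_lamCG _ _ _, isCompletelyPositive_lamCG hF h1F,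
    isTracePreservingMap_lamCG he0 he1, himage, ?_⟩
  rw [himage, traceNorm_smul_vecMulVec_sub_smul_vecMulVec he0 he1 he01 hΔp.trace_nonneg
    hΔm.trace_nonneg, traceNorm_sub_of_mul_eq_zero hΔp hΔm horth, hΔp.traceNorm_eq,
    hΔm.traceNorm_eq]

/-- with `Δ` traceless Hermitian with Jordan decomposition `Δ = Δ₊ − Δ₋`,
`P₊` the projector onto the strictly positive eigenspace of `Δ`, `P₀` the projector onto
its kernel, `E₀` Hermitian with `0 ≤ E₀ ≤ P₀`, and `|0⟩, |1⟩` orthonormal vectors of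
`ℂ^d` (`d ≥ 2`), the map `λ_cg(X) = Tr((P₊+E₀)X)|0⟩⟨0| + Tr((I−P₊−E₀)X)|1⟩⟨1|` is
completely positive and trace-preserving, satisfies
`λ_cg(Δ) = ‖Δ₊‖₁ |0⟩⟨0| − ‖Δ₋‖₁ |1⟩⟨1|`, and consequently `‖λ_cg(Δ)‖₁ = ‖Δ‖₁`. -/
theorem lamCG_is_CPTP_and_preserves_traceNorm
    {m d : ℕ} (hd : 2 ≤ d)
    (Δ Δp Δm : Matrix (Fin m) (Fin m) ℂ)
    (hΔ : Δ.IsHermitian) (hΔtr : Δ.trace = 0)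
    (hΔp : Δp.PosSemidef) (hΔm : Δm.PosSemidef)
    (hJordan : Δ = Δp - Δm) (horth : Δp * Δm = 0)
    (Pp Pm : Matrix (Fin m) (Fin m) ℂ)
    (hPp : IsSupportProjection Pp Δp) (hPm : IsSupportProjection Pm Δm)
    (P0 : Matrix (Fin m) (Fin m) ℂ) (hP0 : P0 = 1 - Pp - Pm)
    (E₀ : Matrix (Fin m) (Fin m) ℂ) (hE₀herm : E₀.IsHermitian)
    (hE₀pos : E₀.PosSemidef) (hE₀le : (P0 - E₀).PosSemidef)
    (e0 e1 : Fin d → ℂ)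
    (he0 : ∑ x : Fin d, (starRingEnd ℂ) (e0 x) * e0 x = 1)
    (he1 : ∑ x : Fin d, (starRingEnd ℂ) (e1 x) * e1 x = 1)
    (he01 : ∑ x : Fin d, (starRingEnd ℂ) (e0 x) * e1 x = 0) :
    IsLinearMap ℂ (lamCG (Pp + E₀) e0 e1) ∧
    IsCompletelyPositive (lamCG (Pp + E₀) e0 e1) ∧
    IsTracePreservingMap (lamCG (Pp + E₀) e0 e1) ∧
    lamCG (Pp + E₀) e0 e1 Δ
      = (traceNorm Δp : ℂ) • Matrix.vecMulVec e0 (star e0)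
        - (traceNorm Δm : ℂ) • Matrix.vecMulVec e1 (star e1) ∧
    traceNorm (lamCG (Pp + E₀) e0 e1 Δ) = traceNorm Δ :=
  lamCG_is_CPTP_and_preserves_traceNorm_general Δ Δp Δm hΔp hΔm hJordan horth Pp Pm hPp hPm P0 hP0
    E₀ hE₀pos hE₀le e0 e1 he0 he1 he01
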